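/- arXiv:2205.03906 — 4 statements merged into one kernel-verified Lean document; each statement's English description precedes it below -/
import Mathlib

section
/- The trust update is compatible with operadic composition: for μ ∈ Δ⁺_N, families ν_i ∈ Δ⁺_{M_i}, guesses γ_{i,j} ∈ Bet_X, and any outcome x ∈ X, the equation γ(x) * (μ ∘ ν) = ((ν·γ)(x) * μ) ∘ (i ↦ γ_i(x) * ν_i) holds; componentwise, γ_{i,j}(x)μ_iν_{i,j} / ∑_{i',j'} γ_{i',j'}(x)μ_{i'}ν_{i',j'} = [ (∑_{j'} ν_{i,j'}γ_{i,j'}(x))μ_i / ∑_{i'}(∑_{j'} ν_{i',j'}γ_{i',j'}(x))μ_{i'} ] · [ γ_{i,j}(x)ν_{i,j} / ∑_{j'} ν_{i,j'}γ_{i,j'}(x) ]. -/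
def IsDist {K : Type} [Fintype K] (μ : K → ℝ) : Prop :=
  (∀ i, 0 < μ i ∧ μ i ≤ 1) ∧ ∑ i, μ i = 1

/-!
Writing `w i j` for the mass `ν i j * γ i j x` that the inner update puts on `j` before
normalising, both sides are `w i j * μ i` divided by the total mass: on the right the
normaliser `∑ j', w i j'` of the inner update cancels against the weight it contributes to
the outer one, and the total mass over `Σ i, M i` splits as a double sum.
-/

section Field

variable {K : Type*} [Field K] {ι : Type*} [Fintype ι] {κ : ι → Type*} [∀ i, Fintype (κ i)]

theorem sum_sigma_mul_eq_sum_sum_mul (w : ∀ i, κ i → K) (μ : ι → K) :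
    ∑ s : Σ i, κ i, w s.1 s.2 * μ s.1 = ∑ i, (∑ j, w i j) * μ i := by
  simp only [Fintype.sum_sigma, Finset.sum_mul]

theorem div_sum_sigma_eq_mul_div_sum (w : ∀ i, κ i → K) (μ : ι → K) (i : ι) (j : κ i)
    (hw : ∑ j', w i j' ≠ 0) :
    w i j * μ i / ∑ s : Σ i, κ i, w s.1 s.2 * μ s.1 =
      (∑ j', w i j') * μ i / (∑ i', (∑ j', w i' j') * μ i') * (w i j / ∑ j', w i j') := by
  rw [sum_sigma_mul_eq_sum_sum_mul, div_mul_div_comm, mul_comm _ (w i j),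
    mul_left_comm, mul_comm (∑ i', _), mul_div_mul_right _ _ hw]

end Field

theorem stmt_6_general {X : Type} [Fintype X] {N : Type} [Fintype N] {M : N → Type} [∀ i, Fintype (M i)]
    (μ : N → ℝ) (ν : ∀ i, M i → ℝ) (γ : ∀ i, M i → X → ℝ) (x : X)
    (hν : ∀ i, IsDist (ν i)) (hγ : ∀ i j, IsDist (γ i j)) :
    ∀ (i : N) (j : M i),
      γ i j x * (μ i * ν i j) / (∑ s : Σ i', M i', γ s.1 s.2 x * (μ s.1 * ν s.1 s.2)) =
        ((∑ j', ν i j' * γ i j' x) * μ i /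
            (∑ i', (∑ j', ν i' j' * γ i' j' x) * μ i')) *
          (γ i j x * ν i j / (∑ j', ν i j' * γ i j' x)) := by
  intro i j
  have hmass : 0 < ∑ j', ν i j' * γ i j' x :=
    Finset.sum_pos (fun j' _ => mul_pos ((hν i).1 j').1 ((hγ i j').1 x).1) ⟨j, Finset.mem_univ j⟩
  simpa only [mul_comm (ν _ _) (γ _ _ x), mul_comm (μ _) (ν _ _), ← mul_assoc] using
    div_sum_sigma_eq_mul_div_sum (fun i j => ν i j * γ i j x) μ i j hmass.ne'

/-- Compatibility of the trust update with operadic composition: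
γ(x) * (μ ∘ ν) = ((ν·γ)(x) * μ) ∘ (i ↦ γ_i(x) * ν_i), componentwise. -/
theorem stmt_6 {X : Type} [Fintype X] [Nonempty X] {N : Type} [Fintype N] [Nonempty N]
    {M : N → Type} [∀ i, Fintype (M i)] [∀ i, Nonempty (M i)]
    (μ : N → ℝ) (ν : ∀ i, M i → ℝ) (γ : ∀ i, M i → X → ℝ) (x : X)
    (hμ : IsDist μ) (hν : ∀ i, IsDist (ν i)) (hγ : ∀ i j, IsDist (γ i j)) :
    ∀ (i : N) (j : M i),
      γ i j x * (μ i * ν i j) / (∑ s : Σ i', M i', γ s.1 s.2 x * (μ s.1 * ν s.1 s.2)) =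
        ((∑ j', ν i j' * γ i j' x) * μ i /
            (∑ i', (∑ j', ν i' j' * γ i' j' x) * μ i')) *
          (γ i j x * ν i j / (∑ j', ν i j' * γ i j' x)) :=
  stmt_6_general μ ν γ x hν hγ
end

section
/- The internal hom [p,q] := ∑_{φ : p→q} y^{∑_{I∈p(1)} q[φ(I)]} is right adjoint to Dirichlet tensor: for all polynomials p, q, r there is a bijection Poly(p ⊗ q, r) ≅ Poly(p, [q,r]), natural in p and r. -/
/-- A map of polynomial functors: forwards on positions, backwards on directions. -/
structure PolyHom (p q : PFunctor.{0}) where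
  onPos : p.A → q.A
  onDir : ∀ a : p.A, q.B (onPos a) → p.B a

def PolyHom.id (p : PFunctor.{0}) : PolyHom p p :=
  ⟨fun a => a, fun _ d => d⟩

def PolyHom.comp {p q r : PFunctor.{0}} (f : PolyHom p q) (g : PolyHom q r) :
    PolyHom p r :=
  ⟨fun a => g.onPos (f.onPos a), fun a d => f.onDir a (g.onDir (f.onPos a) d)⟩

def PolyTensor (p q : PFunctor.{0}) : PFunctor.{0} :=
  ⟨p.A × q.A, fun ab => p.B ab.1 × q.B ab.2⟩

def yPoly : PFunctor.{0} := ⟨PUnit, fun _ => PUnit⟩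

def PolyHom.tensor {p p' q q' : PFunctor.{0}} (f : PolyHom p p') (g : PolyHom q q') :
    PolyHom (PolyTensor p q) (PolyTensor p' q') :=
  ⟨fun ab => (f.onPos ab.1, g.onPos ab.2), fun ab d => (f.onDir ab.1 d.1, g.onDir ab.2 d.2)⟩

structure PolyIso (p q : PFunctor.{0}) where
  hom : PolyHom p q
  inv : PolyHom q p
  hom_inv : hom.comp inv = PolyHom.id p
  inv_hom : inv.comp hom = PolyHom.id q

/-- The internal hom polynomial [q,r] = ∑_{φ : q→r} y^{∑_{J∈q(1)} r[φ(J)]}. -/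
def PolyIhom (q r : PFunctor.{0}) : PFunctor.{0} :=
  ⟨PolyHom q r, fun φ => Σ J : q.A, r.B (φ.onPos J)⟩

def PolyHom.ihomMap {q r r' : PFunctor.{0}} (β : PolyHom r r') :
    PolyHom (PolyIhom q r) (PolyIhom q r') :=
  ⟨fun φ => φ.comp β, fun φ d => ⟨d.1, β.onDir (φ.onPos d.1) d.2⟩⟩

/-!
A map `f : p ⊗ q → r` assigns to each position `(I, J)` a position of `r` together with a backward map
into `p[I] × q[J]`. Fixing `I`, the positions `f(I, J)` and the `q[J]`-components form a map
`q → r`, i.e. a position of `[q, r]`, while the `p[I]`-components, taken over all `J`, form the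
backward map `∑_J r[f(I, J)] → p[I]`. Both constructions are mutually inverse and natural on the
nose.
-/

namespace PolyHom

variable {p q r : PFunctor.{0}}

def curry (f : PolyHom (PolyTensor p q) r) : PolyHom p (PolyIhom q r) :=
  ⟨fun I => ⟨fun J => f.onPos (I, J), fun J d => (f.onDir (I, J) d).2⟩,
    fun I d => (f.onDir (I, d.1) d.2).1⟩

def uncurry (g : PolyHom p (PolyIhom q r)) : PolyHom (PolyTensor p q) r :=
  ⟨fun IJ => (g.onPos IJ.1).onPos IJ.2,
    fun IJ d => (g.onDir IJ.1 ⟨IJ.2, d⟩, (g.onPos IJ.1).onDir IJ.2 d)⟩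

def tensorIhomEquiv : PolyHom (PolyTensor p q) r ≃ PolyHom p (PolyIhom q r) where
  toFun := curry
  invFun := uncurry
  left_inv _ := rfl
  right_inv _ := rfl

theorem curry_tensor_id_comp {p' : PFunctor.{0}} (α : PolyHom p' p)
    (f : PolyHom (PolyTensor p q) r) :
    curry ((α.tensor (PolyHom.id q)).comp f) = α.comp (curry f) :=
  rfl

theorem curry_comp_ihomMap {r' : PFunctor.{0}} (f : PolyHom (PolyTensor p q) r)
    (β : PolyHom r r') :
    curry (f.comp β) = (curry f).comp (ihomMap β) :=
  rfl

end PolyHom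

/-- The internal hom [q,-] is right adjoint to Dirichlet tensor -⊗q:
Poly(p ⊗ q, r) ≅ Poly(p, [q,r]), naturally in p and r. -/
theorem stmt_10 (q : PFunctor.{0}) :
    ∃ e : ∀ p r : PFunctor.{0}, PolyHom (PolyTensor p q) r ≃ PolyHom p (PolyIhom q r),
      (∀ (p p' r : PFunctor.{0}) (α : PolyHom p' p) (f : PolyHom (PolyTensor p q) r),
        e p' r ((α.tensor (PolyHom.id q)).comp f) = α.comp (e p r f)) ∧
      (∀ (p r r' : PFunctor.{0}) (β : PolyHom r r') (f : PolyHom (PolyTensor p q) r),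
        e p r' (f.comp β) = (e p r f).comp (PolyHom.ihomMap β)) :=
  ⟨fun _ _ => PolyHom.tensorIhomEquiv, fun _ _ _ α f => PolyHom.curry_tensor_id_comp α f,
    fun _ _ _ β f => PolyHom.curry_comp_ihomMap f β⟩
end

section
/- A ⊗-monoid in Poly (a 'collective'): a polynomial p with a monoid structure on positions p(1) and co-unital, co-associative distribution maps p[I·J] → p[I] × p[J], determines a dynamic operad whose n-ary coalgebra is the singleton coalgebra on the n-ary product map p^⊗n → p, and the required unit and associativity coherence maps of the dynamic operad are isomorphisms. -/
/-- Splitting a sigma type over `Option α` as a sum. -/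
def sigmaOptionEquivSum {α : Type} (F : Option α → Type) :
    (Σ o : Option α, F o) ≃ F none ⊕ Σ a : α, F (some a) where
  toFun x := match x with
    | ⟨none, y⟩ => Sum.inl y
    | ⟨some a, y⟩ => Sum.inr ⟨a, y⟩
  invFun x := match x with
    | Sum.inl y => ⟨none, y⟩
    | Sum.inr ⟨a, y⟩ => ⟨some a, y⟩
  left_inv := by rintro ⟨(_ | a), y⟩ <;> rfl
  right_inv := by rintro (y | ⟨a, y⟩) <;> rfl

/-- The canonical (lexicographic) equivalence `(Σ i : Fin n, Fin (m i)) ≃ Fin (∑ i, m i)`. -/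
def finSigmaEquiv : ∀ {n : ℕ} (m : Fin n → ℕ), (Σ i : Fin n, Fin (m i)) ≃ Fin (∑ i, m i)
  | 0, _ => (Equiv.equivOfIsEmpty _ (Fin 0)).trans (finCongr (by simp))
  | n + 1, m =>
    (Equiv.sigmaCongrLeft (β := fun i => Fin (m i)) (finSuccEquiv n).symm).symm.trans <|
      (sigmaOptionEquivSum fun o => Fin (m ((finSuccEquiv n).symm o))).trans <|
        (Equiv.sumCongr (finCongr (congrArg m finSuccEquiv_symm_none))
            ((Equiv.sigmaCongr (Equiv.refl (Fin n))
                (fun a => finCongr (congrArg m (finSuccEquiv_symm_some a)))).trans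
              (finSigmaEquiv fun a => m a.succ))).trans <|
          finSumFinEquiv.trans (finCongr (Fin.sum_univ_succ m).symm)

/-- Tensor product of a finite family of polynomials: positions and directions multiply. -/
def tensorFam {n : ℕ} (F : Fin n → PFunctor.{0}) : PFunctor.{0} :=
  ⟨∀ i, (F i).A, fun a => ∀ i, (F i).B (a i)⟩

/-- The n-fold Dirichlet tensor power p^⊗n. -/
def nPow (p : PFunctor.{0}) (n : ℕ) : PFunctor.{0} :=
  tensorFam (fun _ : Fin n => p)

/-- Tensor product of a family of polynomial maps. -/
def tensorMapFam {n : ℕ} {F G : Fin n → PFunctor.{0}} (f : ∀ i, PolyHom (F i) (G i)) :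
    PolyHom (tensorFam F) (tensorFam G) :=
  ⟨fun a i => (f i).onPos (a i), fun a d i => (f i).onDir (a i) (d i)⟩

def leftUnitHom (p : PFunctor.{0}) : PolyHom (PolyTensor yPoly p) p :=
  ⟨fun a => a.2, fun _ d => (PUnit.unit, d)⟩

def rightUnitHom (p : PFunctor.{0}) : PolyHom (PolyTensor p yPoly) p :=
  ⟨fun a => a.1, fun _ d => (d, PUnit.unit)⟩

def assocHom (p : PFunctor.{0}) :
    PolyHom (PolyTensor (PolyTensor p p) p) (PolyTensor p (PolyTensor p p)) :=
  ⟨fun a => (a.1.1, (a.1.2, a.2)), fun _ d => ((d.1, d.2.1), d.2.2)⟩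

/-- The canonical identification p^⊗0 ≅ y (as a map to y). -/
def zeroToY (p : PFunctor.{0}) : PolyHom (nPow p 0) yPoly :=
  ⟨fun _ => PUnit.unit, fun _ _ => fun i => i.elim0⟩

/-- The canonical map p^⊗1 → p; it is the identity of p transported along p^⊗1 ≅ p. -/
def unary (p : PFunctor.{0}) : PolyHom (nPow p 1) p :=
  ⟨fun a => a 0, fun a d i => match i with | ⟨0, _⟩ => d⟩

/-- The canonical map p^⊗2 → p ⊗ p. -/
def binHom (p : PFunctor.{0}) : PolyHom (nPow p 2) (PolyTensor p p) :=
  ⟨fun a => (a 0, a 1), fun a d i => match i with | ⟨0, _⟩ => d.1 | ⟨1, _⟩ => d.2⟩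

/-- The canonical reassociation map ⊗ᵢ p^⊗(m i) → p^⊗(∑ m i). -/
def reassocHom (p : PFunctor.{0}) {n : ℕ} (m : Fin n → ℕ) :
    PolyHom (tensorFam fun i => nPow p (m i)) (nPow p (∑ i, m i)) :=
  ⟨fun a k => a ((finSigmaEquiv m).symm k).1 ((finSigmaEquiv m).symm k).2,
   fun a d i j =>
     cast (congrArg (fun s : Σ i, Fin (m i) => p.B (a s.1 s.2))
       ((finSigmaEquiv m).symm_apply_apply ⟨i, j⟩)) (d (finSigmaEquiv m ⟨i, j⟩))⟩

/-! The n-ary product `μₙ : p^⊗n → p` is built by splitting off the first factor: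
`μ₀ = η` and `μₙ₊₁ = (id ⊗ μₙ) ≫ mu`; right unitality identifies `μ₁` and `μ₂`. The heart of
the compositor equation is that `μ` turns concatenation into multiplication,
`append ≫ μ_{a+b} = (μ_a ⊗ μ_b) ≫ mu`, which follows by induction on `a` from associativity (and
left unitality when `a = 0`). The compositor for blocks of sizes `m₀, …, mₙ₋₁` then follows by
induction on `n`, splitting off the first block on both sides: the reassociation map itself
factors as "split off the first block, reassociate the rest, append". -/

universe u

local infixr:80 " ≫ " => PolyHom.comp
local infixr:90 " ⊗ " => PolyHom.tensor

theorem cast_eq_cast_of_heq {α β γ : Sort u} {a : α} {b : β} (hα : α = γ) (hβ : β = γ)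
    (h : a ≍ b) : cast hα a = cast hβ b := by
  subst hα hβ; exact eq_of_heq h

namespace PolyHom

variable {p q : PFunctor.{0}}

theorem ext_of_onPos {f g : PolyHom p q} (hPos : f.onPos = g.onPos)
    (hDir : ∀ a (d : q.B (f.onPos a)),
      f.onDir a d = g.onDir a (cast (congrArg q.B (congrFun hPos a)) d)) : f = g := by
  obtain ⟨fPos, fDir⟩ := f
  obtain ⟨gPos, gDir⟩ := g
  obtain rfl : fPos = gPos := hPos
  congr
  funext a d
  exact hDir a d

theorem ext_nPow {N : ℕ} {f g : PolyHom q (nPow p N)} (hPos : ∀ a k, f.onPos a k = g.onPos a k)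
    (hDir : ∀ a (d : (nPow p N).B (f.onPos a)),
      f.onDir a d = g.onDir a fun k => cast (congrArg p.B (hPos a k)) (d k)) : f = g := by
  obtain ⟨fPos, fDir⟩ := f
  obtain ⟨gPos, gDir⟩ := g
  obtain rfl : fPos = gPos := funext fun a => funext (hPos a)
  congr
  funext a d
  simpa only [cast_eq] using hDir a d

end PolyHom

def castPow (p : PFunctor.{0}) {n n' : ℕ} (h : n = n') : PolyHom (nPow p n) (nPow p n') :=
  ⟨fun a i => a (Fin.cast h.symm i), fun _ d i => d (Fin.cast h i)⟩

def tensorAssoc (p q r : PFunctor.{0}) :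
    PolyHom (PolyTensor (PolyTensor p q) r) (PolyTensor p (PolyTensor q r)) :=
  ⟨fun a => (a.1.1, (a.1.2, a.2)), fun _ d => ((d.1, d.2.1), d.2.2)⟩

def tensorFamUncons {n : ℕ} (F : Fin (n + 1) → PFunctor.{0}) :
    PolyHom (tensorFam F) (PolyTensor (F 0) (tensorFam fun j : Fin n => F j.succ)) :=
  ⟨fun a => (a 0, fun j => a j.succ),
   fun a d => Fin.cons (α := fun i => (F i).B (a i)) d.1 d.2⟩

def nPowUncons (p : PFunctor.{0}) (n : ℕ) : PolyHom (nPow p (n + 1)) (PolyTensor p (nPow p n)) :=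
  tensorFamUncons fun _ => p

def nPowCons (p : PFunctor.{0}) (n : ℕ) : PolyHom (PolyTensor p (nPow p n)) (nPow p (n + 1)) :=
  ⟨fun a => Fin.cons a.1 a.2, fun _ d => (d 0, fun j => d j.succ)⟩

def nPowAppend (p : PFunctor.{0}) (a b : ℕ) :
    PolyHom (PolyTensor (nPow p a) (nPow p b)) (nPow p (a + b)) :=
  ⟨fun x k => Sum.elim x.1 x.2 (finSumFinEquiv.symm k),
   fun x d =>
     (fun i => cast (congrArg (fun s => p.B (Sum.elim x.1 x.2 s))
        (finSumFinEquiv.symm_apply_apply (Sum.inl i))) (d (finSumFinEquiv (Sum.inl i))),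
      fun j => cast (congrArg (fun s => p.B (Sum.elim x.1 x.2 s))
        (finSumFinEquiv.symm_apply_apply (Sum.inr j))) (d (finSumFinEquiv (Sum.inr j))))⟩

theorem tensorMapFam_comp_tensorFamUncons {n : ℕ} {F G : Fin (n + 1) → PFunctor.{0}}
    (f : ∀ i, PolyHom (F i) (G i)) :
    tensorMapFam f ≫ tensorFamUncons G =
      tensorFamUncons F ≫ f 0 ⊗ tensorMapFam fun j : Fin n => f j.succ := by
  refine PolyHom.ext_of_onPos rfl fun a d => ?_
  funext i
  induction i using Fin.cases <;> rfl

theorem nPowAppend_zero (p : PFunctor.{0}) (b : ℕ) :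
    nPowAppend p 0 b ≫ castPow p (Nat.zero_add b) =
      zeroToY p ⊗ PolyHom.id (nPow p b) ≫ leftUnitHom (nPow p b) := by
  have hk (k : Fin b) : finSumFinEquiv.symm (Fin.cast (Nat.zero_add b).symm k) = Sum.inr k := by
    rw [show Fin.cast (Nat.zero_add b).symm k = Fin.natAdd 0 k by ext; simp,
      finSumFinEquiv_symm_apply_natAdd]
  refine PolyHom.ext_nPow (fun x k => ?_) fun x d => Prod.ext (funext fun i => i.elim0) ?_
  · exact congrArg (Sum.elim x.1 x.2) (hk k)
  · funext j
    refine cast_eq_cast_of_heq _ _ (congr_arg_heq d ?_)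
    ext; simp

theorem nPowAppend_succ (p : PFunctor.{0}) (a b : ℕ) :
    nPowAppend p (a + 1) b =
      nPowUncons p a ⊗ PolyHom.id (nPow p b) ≫ tensorAssoc p (nPow p a) (nPow p b) ≫
        PolyHom.id p ⊗ nPowAppend p a b ≫ nPowCons p (a + b) ≫
          castPow p (Nat.succ_add a b).symm := by
  have hl (i : Fin a) : Fin.cast (Nat.succ_add a b) (finSumFinEquiv (Sum.inl i.succ)) =
      (finSumFinEquiv (Sum.inl i)).succ := by ext; simp
  have hr (j : Fin b) : Fin.cast (Nat.succ_add a b) (finSumFinEquiv (Sum.inr j)) =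
      (finSumFinEquiv (Sum.inr j)).succ := by ext; simp; omega
  refine PolyHom.ext_nPow (fun x k => ?_) (fun x d => ?_) <;>
    dsimp only [nPowAppend, PolyHom.comp, PolyHom.tensor, PolyHom.id, nPowUncons,
      tensorFamUncons, nPowCons, tensorAssoc, castPow]
  · obtain ⟨s | j, rfl⟩ := finSumFinEquiv.surjective k
    · cases s using Fin.cases with
      | zero => rfl
      | succ i => simp only [hl, Fin.cons_succ, Equiv.symm_apply_apply]; rfl
    · simp only [hr, Fin.cons_succ, Equiv.symm_apply_apply]; rfl
  · refine congrArg₂ Prod.mk (funext fun i => ?_) (funext fun j => ?_)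
    · induction i using Fin.cases with
      | zero =>
        erw [Fin.cons_zero]
        exact cast_eq_cast_of_heq _ _ (congr_arg_heq d (by ext; simp))
      | succ i =>
        erw [Fin.cons_succ, cast_cast]
        exact cast_eq_cast_of_heq _ _ (congr_arg_heq d (by ext; simp))
    · erw [cast_cast]
      exact cast_eq_cast_of_heq _ _ (congr_arg_heq d (by ext; simp; omega))

theorem finSigmaEquiv_zero_val {n : ℕ} (m : Fin (n + 1) → ℕ) (j : Fin (m 0)) :
    ((finSigmaEquiv m ⟨0, j⟩ : Fin _) : ℕ) = j := by
  change ((finSigmaEquiv m (Equiv.sigmaCongrLeft (β := fun i => Fin (m i))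
    (finSuccEquiv n).symm ⟨none, j⟩) : Fin _) : ℕ) = j
  simp only [finSigmaEquiv, Equiv.trans_apply, Equiv.symm_apply_apply]
  simp [sigmaOptionEquivSum]
  rfl

theorem finSigmaEquiv_succ_val {n : ℕ} (m : Fin (n + 1) → ℕ) (i : Fin n)
    (j : Fin (m i.succ)) :
    ((finSigmaEquiv m ⟨i.succ, j⟩ : Fin _) : ℕ) =
      m 0 + ((finSigmaEquiv (fun k : Fin n => m k.succ) ⟨i, j⟩ : Fin _) : ℕ) := by
  change ((finSigmaEquiv m (Equiv.sigmaCongrLeft (β := fun i => Fin (m i))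
    (finSuccEquiv n).symm ⟨some i, j⟩) : Fin _) : ℕ) = _
  simp only [finSigmaEquiv, Equiv.trans_apply, Equiv.symm_apply_apply]
  simp [sigmaOptionEquivSum]
  rfl

theorem reassocHom_succ (p : PFunctor.{0}) {n : ℕ} (m : Fin (n + 1) → ℕ) :
    reassocHom p m =
      tensorFamUncons (fun i => nPow p (m i)) ≫
        PolyHom.id (nPow p (m 0)) ⊗ reassocHom p (fun i : Fin n => m i.succ) ≫
          nPowAppend p (m 0) (∑ i : Fin n, m i.succ) ≫
            castPow p (Fin.sum_univ_succ m).symm := by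
  have h0 (j : Fin (m 0)) : Fin.cast (Fin.sum_univ_succ m) (finSigmaEquiv m ⟨0, j⟩) =
      Fin.castAdd (∑ i : Fin n, m i.succ) j := by
    ext; simp [finSigmaEquiv_zero_val]
  have hs (i : Fin n) (j : Fin (m i.succ)) :
      Fin.cast (Fin.sum_univ_succ m) (finSigmaEquiv m ⟨i.succ, j⟩) =
        Fin.natAdd (m 0) (finSigmaEquiv (fun k : Fin n => m k.succ) ⟨i, j⟩) := by
    ext; simp [finSigmaEquiv_succ_val]
  refine PolyHom.ext_nPow (fun a k => ?_) fun a d => ?_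
  · obtain ⟨⟨i, j⟩, rfl⟩ := (finSigmaEquiv m).surjective k
    dsimp only [reassocHom, PolyHom.comp, PolyHom.tensor, PolyHom.id, tensorFamUncons,
      nPowAppend, castPow]
    rw [Equiv.symm_apply_apply]
    induction i using Fin.cases with
    | zero =>
      simp only [h0, finSumFinEquiv_symm_apply_castAdd]
      rfl
    | succ i =>
      simp only [hs, finSumFinEquiv_symm_apply_natAdd]
      erw [Sum.elim_inr, Equiv.symm_apply_apply]
  · dsimp only [reassocHom, PolyHom.comp, PolyHom.tensor, PolyHom.id, tensorFamUncons,
      nPowAppend, castPow]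
    funext i j
    induction i using Fin.cases with
    | zero =>
      erw [Fin.cons_zero, cast_cast]
      exact cast_eq_cast_of_heq _ _ (congr_arg_heq d (by ext; simp [finSigmaEquiv_zero_val]))
    | succ i =>
      erw [Fin.cons_succ, cast_cast, cast_cast]
      exact cast_eq_cast_of_heq _ _ (congr_arg_heq d (by ext; simp [finSigmaEquiv_succ_val]))

section NAryProduct

universe v

variable {p : PFunctor.{0, u}} (η : PolyHom yPoly.{v} p) (mu : PolyHom (PolyTensor p p) p)

def nAryProd : ∀ n : ℕ, PolyHom (nPow p n) p
  | 0 => zeroToY p ≫ η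
  | n + 1 => nPowUncons p n ≫ PolyHom.id p ⊗ nAryProd n ≫ mu

theorem castPow_comp_nAryProd {n n' : ℕ} (h : n = n') :
    castPow p h ≫ nAryProd η mu n' = nAryProd η mu n := by
  subst h; rfl

theorem nAryProd_one (h_right : PolyHom.id p ⊗ η ≫ mu = rightUnitHom p) :
    nAryProd η mu 1 = unary p :=
  calc nAryProd η mu 1
    _ = nPowUncons p 0 ≫ PolyHom.id p ⊗ zeroToY p ≫ PolyHom.id p ⊗ η ≫ mu := rfl
    _ = nPowUncons p 0 ≫ PolyHom.id p ⊗ zeroToY p ≫ rightUnitHom p := by rw [h_right]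
    _ = unary p := PolyHom.ext_of_onPos rfl fun a d => funext fun i => by
      obtain rfl := Fin.fin_one_eq_zero i
      rfl

theorem nAryProd_two (h_right : PolyHom.id p ⊗ η ≫ mu = rightUnitHom p) :
    nAryProd η mu 2 = binHom p ≫ mu :=
  calc nAryProd η mu 2 = nPowUncons p 1 ≫ PolyHom.id p ⊗ unary p ≫ mu := by
        rw [← nAryProd_one η mu h_right]; rfl
    _ = binHom p ≫ mu := PolyHom.ext_of_onPos rfl fun a d => funext fun i => by
      fin_cases i <;> rfl

theorem nPowAppend_comp_nAryProd (h_left : η ⊗ PolyHom.id p ≫ mu = leftUnitHom p)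
    (h_assoc : mu ⊗ PolyHom.id p ≫ mu = assocHom p ≫ PolyHom.id p ⊗ mu ≫ mu) (a b : ℕ) :
    nPowAppend p a b ≫ nAryProd η mu (a + b) = nAryProd η mu a ⊗ nAryProd η mu b ≫ mu := by
  induction a with
  | zero =>
    calc nPowAppend p 0 b ≫ nAryProd η mu (0 + b)
        = (nPowAppend p 0 b ≫ castPow p (Nat.zero_add b)) ≫ nAryProd η mu b := by
          rw [← castPow_comp_nAryProd η mu (Nat.zero_add b)]; rfl
      _ = zeroToY p ⊗ nAryProd η mu b ≫ η ⊗ PolyHom.id p ≫ mu := by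
          -- the universe of `yPoly` in `nPowAppend_zero` is not determined by the goal
          rw [nPowAppend_zero.{u, v}, h_left]; rfl
  | succ a ih =>
    calc nPowAppend p (a + 1) b ≫ nAryProd η mu (a + 1 + b)
        = nPowUncons p a ⊗ PolyHom.id (nPow p b) ≫
            tensorAssoc p (nPow p a) (nPow p b) ≫ PolyHom.id p ⊗ nPowAppend p a b ≫
              nPowCons p (a + b) ≫ nAryProd η mu (a + b + 1) := by
          rw [nPowAppend_succ, ← castPow_comp_nAryProd η mu (Nat.succ_add a b).symm]; rfl
      _ = nPowUncons p a ⊗ PolyHom.id (nPow p b) ≫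
            tensorAssoc p (nPow p a) (nPow p b) ≫
              PolyHom.id p ⊗ (nPowAppend p a b ≫ nAryProd η mu (a + b)) ≫ mu := rfl
      _ = (nPowUncons p a ≫ PolyHom.id p ⊗ nAryProd η mu a) ⊗ nAryProd η mu b ≫
            assocHom p ≫ PolyHom.id p ⊗ mu ≫ mu := by rw [ih]; rfl
      _ = nAryProd η mu (a + 1) ⊗ nAryProd η mu b ≫ mu := by rw [← h_assoc]; rfl

theorem tensorMapFam_comp_nAryProd (h_left : η ⊗ PolyHom.id p ≫ mu = leftUnitHom p)
    (h_assoc : mu ⊗ PolyHom.id p ≫ mu = assocHom p ≫ PolyHom.id p ⊗ mu ≫ mu)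
    {n : ℕ} (m : Fin n → ℕ) :
    tensorMapFam (fun i => nAryProd η mu (m i)) ≫ nAryProd η mu n =
      reassocHom p m ≫ nAryProd η mu (∑ i, m i) := by
  induction n with
  | zero =>
    have hm : ∑ i, m i = 0 := Fin.sum_univ_zero m
    have : tensorMapFam (fun i : Fin 0 => nAryProd η mu (m i)) = reassocHom p m ≫ castPow p hm :=
      PolyHom.ext_of_onPos (funext fun _ => funext fun i => i.elim0) fun _ _ =>
        funext fun i => i.elim0
    rw [this, ← castPow_comp_nAryProd η mu hm]
    rfl
  | succ n ih =>
    let m' := fun j : Fin n => m j.succ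
    calc tensorMapFam (fun i => nAryProd η mu (m i)) ≫ nAryProd η mu (n + 1)
        = (tensorMapFam (fun i => nAryProd η mu (m i)) ≫
            tensorFamUncons fun _ : Fin (n + 1) => p) ≫
              PolyHom.id p ⊗ nAryProd η mu n ≫ mu := rfl
      _ = tensorFamUncons (fun i => nPow p (m i)) ≫
            nAryProd η mu (m 0) ⊗ (tensorMapFam (fun j => nAryProd η mu (m' j)) ≫
              nAryProd η mu n) ≫ mu := by
          rw [tensorMapFam_comp_tensorFamUncons]; rfl
      _ = tensorFamUncons (fun i => nPow p (m i)) ≫ PolyHom.id _ ⊗ reassocHom p m' ≫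
            nPowAppend p (m 0) (∑ j, m' j) ≫ nAryProd η mu (m 0 + ∑ j, m' j) := by
          rw [ih, nPowAppend_comp_nAryProd η mu h_left h_assoc]; rfl
      _ = reassocHom p m ≫ nAryProd η mu (∑ i, m i) := by
          rw [reassocHom_succ, ← castPow_comp_nAryProd η mu (Fin.sum_univ_succ m).symm]; rfl

end NAryProduct

/-- A singleton coalgebra has one state and trivial update, so the `n`-ary coalgebra of the
dynamic operad is just its map `μ n`, and the identitor and compositors are the equations below. -/
theorem stmt_15 (p : PFunctor.{0}) (η : PolyHom yPoly p) (mu : PolyHom (PolyTensor p p) p)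
    (h_left : (η.tensor (PolyHom.id p)).comp mu = leftUnitHom p)
    (h_right : ((PolyHom.id p).tensor η).comp mu = rightUnitHom p)
    (h_assoc : (mu.tensor (PolyHom.id p)).comp mu =
      (assocHom p).comp (((PolyHom.id p).tensor mu).comp mu)) :
    ∃ μ : ∀ n : ℕ, PolyHom (nPow p n) p,
      μ 0 = (zeroToY p).comp η ∧
      μ 1 = unary p ∧
      μ 2 = (binHom p).comp mu ∧
      ∀ {n : ℕ} (m : Fin n → ℕ),
        (tensorMapFam fun i => μ (m i)).comp (μ n) =
          (reassocHom p m).comp (μ (∑ i, m i)) :=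
  ⟨nAryProd η mu, rfl, nAryProd_one η mu h_right, nAryProd_two η mu h_right,
    tensorMapFam_comp_nAryProd η mu h_left h_assoc⟩
end

section
/- The gradient-descent compositor preserves actions on directions (chain rule for transposed derivatives): for differentiable f : ℝ^{L+ℓ} → ℝ^m and g : ℝ^{M+m} → ℝ^n, and points p ∈ ℝ^L, q ∈ ℝ^M, x ∈ ℝ^ℓ, and any z ∈ ℝ^n, letting h(w,v,u) = g(w, f(v,u)), we have that (Dh_{(q,p,x)})ᵀ z restricted to the (v,u)-components equals (Df_{(p,x)})ᵀ · π_m((Dg_{(q,f(p,x))})ᵀ z), where π_m projects onto the last m coordinates; in particular the ℓ-component satisfies π_ℓ (Dh)ᵀ z = π_ℓ (Df)ᵀ π_m (Dg)ᵀ z. -/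
/-- Concatenation of coordinate blocks: ℝ^a × ℝ^b → ℝ^(a+b). -/
def append {a b : ℕ} (u : Fin a → ℝ) (v : Fin b → ℝ) : Fin (a + b) → ℝ :=
  fun i => Sum.elim u v (finSumFinEquiv.symm i)

/-- The Jacobian matrix of f at x: entries are the directional derivatives of the
coordinate functions along the standard basis vectors. -/
noncomputable def jac {a b : ℕ} (f : (Fin a → ℝ) → Fin b → ℝ) (x : Fin a → ℝ) :
    Matrix (Fin b) (Fin a) ℝ :=
  fun i j => fderiv ℝ f x (Pi.single j 1) i

/-! ### Auxiliary linear maps and lemmas -/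

noncomputable def projL' (a b : ℕ) : ((Fin (a + b) → ℝ) →L[ℝ] (Fin a → ℝ)) :=
  ContinuousLinearMap.pi fun i => ContinuousLinearMap.proj (Fin.castAdd b i)

noncomputable def projR' (a b : ℕ) : ((Fin (a + b) → ℝ) →L[ℝ] (Fin b → ℝ)) :=
  ContinuousLinearMap.pi fun i => ContinuousLinearMap.proj (Fin.natAdd a i)

noncomputable def appendL (a b : ℕ) :
    ((Fin a → ℝ) × (Fin b → ℝ)) →L[ℝ] (Fin (a + b) → ℝ) :=
  ContinuousLinearMap.pi fun i =>
    Sum.elim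
      (fun j => (ContinuousLinearMap.proj j).comp (ContinuousLinearMap.fst ℝ _ _))
      (fun j => (ContinuousLinearMap.proj j).comp (ContinuousLinearMap.snd ℝ _ _))
      (finSumFinEquiv.symm i)

lemma appendL_apply {a b : ℕ} (u : Fin a → ℝ) (v : Fin b → ℝ) :
    appendL a b (u, v) = append u v := by
  funext i
  show (Sum.elim _ _ (finSumFinEquiv.symm i) : _ →L[ℝ] ℝ) (u, v)
      = Sum.elim u v (finSumFinEquiv.symm i)
  rcases finSumFinEquiv.symm i with j | j <;> rfl

lemma append_castAdd {a b : ℕ} (u : Fin a → ℝ) (v : Fin b → ℝ) (j : Fin a) :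
    append u v (Fin.castAdd b j) = u j := by
  simp [append, finSumFinEquiv_symm_apply_castAdd]

lemma append_natAdd {a b : ℕ} (u : Fin a → ℝ) (v : Fin b → ℝ) (j : Fin b) :
    append u v (Fin.natAdd a j) = v j := by
  simp [append, finSumFinEquiv_symm_apply_natAdd]

lemma natAdd_injective (a b : ℕ) :
    Function.Injective (Fin.natAdd a : Fin b → Fin (a + b)) := by
  intro i j hij
  simpa [Fin.ext_iff] using hij

lemma castAdd_ne_natAdd {a b : ℕ} (i : Fin a) (j : Fin b) :
    Fin.castAdd b i ≠ Fin.natAdd a j := by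
  have hi := i.isLt
  intro hh
  have := congrArg Fin.val hh
  simp only [Fin.coe_castAdd, Fin.coe_natAdd] at this
  omega

lemma projL'_single {a b : ℕ} (i : Fin b) :
    projL' a b (Pi.single (Fin.natAdd a i) (1 : ℝ)) = 0 := by
  funext j
  show (Pi.single (Fin.natAdd a i) (1 : ℝ) : Fin (a + b) → ℝ) (Fin.castAdd b j) = (0 : Fin a → ℝ) j
  simp [Pi.single_eq_of_ne (castAdd_ne_natAdd j i)]

lemma projR'_single {a b : ℕ} (i : Fin b) :
    projR' a b (Pi.single (Fin.natAdd a i) (1 : ℝ)) = Pi.single i 1 := by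
  funext k
  show (Pi.single (Fin.natAdd a i) (1 : ℝ) : Fin (a + b) → ℝ) (Fin.natAdd a k) = (Pi.single i (1 : ℝ) : Fin b → ℝ) k
  simp [Pi.single_apply, (natAdd_injective a b).eq_iff]

lemma append_zero_eq_sum {a b : ℕ} (u : Fin b → ℝ) :
    append (0 : Fin a → ℝ) u = ∑ j, u j • (Pi.single (Fin.natAdd a j) (1 : ℝ) : Fin (a + b) → ℝ) := by
  funext i
  rw [Finset.sum_apply]
  refine Fin.addCases (fun j => ?_) (fun j => ?_) i
  · rw [append_castAdd]
    symm
    refine Finset.sum_eq_zero fun k _ => ?_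
    simp [Pi.single_eq_of_ne (castAdd_ne_natAdd j k)]
  · rw [append_natAdd]
    have : ∀ k : Fin b, (u k • (Pi.single (Fin.natAdd a k) (1 : ℝ) : Fin (a + b) → ℝ)) (Fin.natAdd a j)
        = if j = k then u k else 0 := by
      intro k
      simp [Pi.single_apply, (natAdd_injective a b).eq_iff]
    simp only [this]
    simp

/-- The gradient-descent compositor preserves actions on directions (chain rule for
transposed Jacobians): with h(w,u) = g(w, f(u)) on ℝ^(M+(L+l)), the (L+l)-block of
(Dh).transpose z equals (Df).transpose · π_m((Dg).transpose z); in particular the same holds for the l-block. -/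
theorem stmt_17 (L l M m n : ℕ)
    (f : (Fin (L + l) → ℝ) → Fin m → ℝ) (g : (Fin (M + m) → ℝ) → Fin n → ℝ)
    (hf : Differentiable ℝ f) (hg : Differentiable ℝ g)
    (p : Fin L → ℝ) (q : Fin M → ℝ) (x : Fin l → ℝ) (z : Fin n → ℝ) :
    let h : (Fin (M + (L + l)) → ℝ) → Fin n → ℝ := fun w =>
      g (append (fun i => w (Fin.castAdd (L + l) i))
          (f (fun i => w (Fin.natAdd M i))))
    ((fun i : Fin (L + l) =>
        ((jac h (append q (append p x))).transpose.mulVec z) (Fin.natAdd M i)) =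
      (jac f (append p x)).transpose.mulVec
        (fun i : Fin m =>
          ((jac g (append q (f (append p x)))).transpose.mulVec z) (Fin.natAdd M i))) ∧
    ((fun i : Fin l =>
        ((jac h (append q (append p x))).transpose.mulVec z) (Fin.natAdd M (Fin.natAdd L i))) =
      fun i : Fin l =>
        ((jac f (append p x)).transpose.mulVec
          (fun i' : Fin m =>
            ((jac g (append q (f (append p x)))).transpose.mulVec z) (Fin.natAdd M i')))
          (Fin.natAdd L i)) := by
  intro h
  set y : Fin (M + (L + l)) → ℝ := append q (append p x) with hy
  set y' : Fin (M + m) → ℝ := append q (f (append p x)) with hy'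
  have hprojL : projL' M (L + l) y = q := by
    funext i
    show y (Fin.castAdd (L + l) i) = q i
    exact append_castAdd _ _ i
  have hprojR : projR' M (L + l) y = append p x := by
    funext i
    show y (Fin.natAdd M i) = append p x i
    exact append_natAdd _ _ i
  -- the derivative of h at y
  set D : (Fin (M + (L + l)) → ℝ) →L[ℝ] (Fin (M + m) → ℝ) :=
    (appendL M m).comp ((projL' M (L + l)).prod
      ((fderiv ℝ f (append p x)).comp (projR' M (L + l)))) with hD
  have hfd_h : HasFDerivAt h ((fderiv ℝ g y').comp D) y := by
    have h1 : HasFDerivAt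
        (fun w : Fin (M + (L + l)) → ℝ => (projL' M (L + l) w, f (projR' M (L + l) w)))
        ((projL' M (L + l)).prod ((fderiv ℝ f (append p x)).comp (projR' M (L + l)))) y := by
      refine HasFDerivAt.prodMk ((projL' M (L + l)).hasFDerivAt) ?_
      have hfd : HasFDerivAt f (fderiv ℝ f (append p x)) (projR' M (L + l) y) := by
        rw [hprojR]; exact (hf _).hasFDerivAt
      exact hfd.comp y (projR' M (L + l)).hasFDerivAt
    have h2 := ((appendL M m).hasFDerivAt).comp y h1
    have h3 : HasFDerivAt g (fderiv ℝ g y')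
        (appendL M m (projL' M (L + l) y, f (projR' M (L + l) y))) := by
      rw [appendL_apply, hprojL, hprojR]
      exact (hg _).hasFDerivAt
    have h4 := h3.comp y h2
    have hcomp : h = g ∘ (⇑(appendL M m) ∘
        fun w => (projL' M (L + l) w, f (projR' M (L + l) w))) := by
      funext w
      show g _ = g (appendL M m (projL' M (L + l) w, f (projR' M (L + l) w)))
      rw [appendL_apply]
      rfl
    rw [hcomp]
    exact h4
  have hfderiv : fderiv ℝ h y = (fderiv ℝ g y').comp D := hfd_h.fderiv
  -- value of D on basis directions in the (L+l)-block
  have hDval : ∀ i : Fin (L + l),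
      D (Pi.single (Fin.natAdd M i) 1) =
        append (0 : Fin M → ℝ) (fderiv ℝ f (append p x) (Pi.single i 1)) := by
    intro i
    rw [hD]
    simp only [ContinuousLinearMap.comp_apply, ContinuousLinearMap.prod_apply,
      projL'_single, projR'_single]
    exact appendL_apply _ _
  -- expansion of fderiv g at append 0 u
  have hgexp : ∀ (u : Fin m → ℝ) (k : Fin n),
      fderiv ℝ g y' (append (0 : Fin M → ℝ) u) k
        = ∑ j', u j' * fderiv ℝ g y' (Pi.single (Fin.natAdd M j') 1) k := by
    intro u k
    rw [append_zero_eq_sum, map_sum, Finset.sum_apply]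
    simp [smul_eq_mul]
  -- the key pointwise identity
  have key : ∀ i : Fin (L + l),
      ((jac h y).transpose.mulVec z) (Fin.natAdd M i) =
      ((jac f (append p x)).transpose.mulVec
        (fun i' : Fin m =>
          ((jac g y').transpose.mulVec z) (Fin.natAdd M i'))) i := by
    intro i
    have hjh : ∀ k : Fin n, jac h y k (Fin.natAdd M i)
        = ∑ j', fderiv ℝ f (append p x) (Pi.single i 1) j'
            * fderiv ℝ g y' (Pi.single (Fin.natAdd M j') 1) k := by
      intro k
      show fderiv ℝ h y (Pi.single (Fin.natAdd M i) 1) k = _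
      rw [hfderiv]
      simp only [ContinuousLinearMap.comp_apply]
      rw [hDval i, hgexp]
    simp only [Matrix.mulVec, Matrix.transpose_apply, dotProduct]
    simp only [hjh]
    have hjf : ∀ j' : Fin m, jac f (append p x) j' i
        = fderiv ℝ f (append p x) (Pi.single i 1) j' := fun _ => rfl
    have hjg : ∀ (k : Fin n) (j' : Fin m), jac g y' k (Fin.natAdd M j')
        = fderiv ℝ g y' (Pi.single (Fin.natAdd M j') 1) k := fun _ _ => rfl
    simp only [hjf, hjg, Finset.sum_mul]
    rw [Finset.sum_comm]
    refine Finset.sum_congr rfl fun j' _ => ?_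
    rw [Finset.mul_sum]
    refine Finset.sum_congr rfl fun k _ => ?_
    ring
  exact ⟨funext fun i => key i, funext fun i => key (Fin.natAdd L i)⟩
end
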